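/- Let G be a group with finite symmetric generating set X and let L = Geo(G,X). If w ∼_L w² for every nonempty word w over X, then for every geodesic word w over X and every integer m ≥ 1, the word w^m is geodesic. In particular, G is torsion-free. -/

import Mathlib

/-! Since `w ∼ w²` in the syntactic congruence of `Geo(G,X)`, membership of `w · w^k` in
`Geo(G,X)` transfers to `w² · w^k`, so all positive powers of a geodesic word are geodesic.
If `g ≠ 1` had order `n ≥ 1`, a geodesic word `w` for `g` would make `w^n` a nonempty geodesic
word representing `1`, which is absurd. -/

/-- `pre_{k-1}`, `suf_{k-1}` and `sub_k` agree: the equivalence `∼_k` on words. -/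
def SimK {A : Type*} (k : ℕ) (u v : List A) : Prop :=
  u.take (k - 1) = v.take (k - 1) ∧
  u.drop (u.length - (k - 1)) = v.drop (v.length - (k - 1)) ∧
  ∀ s : List A, s.length = k → (s <:+: u ↔ s <:+: v)

/-- A language `L` is `k`-locally testable if membership is invariant under `∼_k`. -/
def LocallyTestable {A : Type*} (k : ℕ) (L : Set (List A)) : Prop :=
  ∀ u v : List A, SimK k u v → (u ∈ L ↔ v ∈ L)

/-- The syntactic congruence of a language: `u ∼_L v` iff `sut ∈ L ↔ svt ∈ L` for all `s, t`. -/
def SynCong {A : Type*} (L : Set (List A)) (u v : List A) : Prop :=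
  ∀ s t : List A, s ++ u ++ t ∈ L ↔ s ++ v ++ t ∈ L

/-- The element of `G` represented by a word over the generating set `X`. -/
def wordProd {G : Type*} [Group G] {X : Set G} (w : List X) : G :=
  (w.map Subtype.val).prod

/-- A word over `X` is geodesic if no word representing the same element is shorter. -/
def IsGeodesic {G : Type*} [Group G] (X : Set G) (w : List X) : Prop :=
  ∀ v : List X, wordProd v = wordProd w → w.length ≤ v.length

/-- The language of all geodesic words over `X`. -/
def Geo {G : Type*} [Group G] (X : Set G) : Set (List X) :=
  {w | IsGeodesic X w}

/-- The `j`-th power of a word in the free monoid (concatenation of `j` copies). -/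
def listPow {A : Type*} (w : List A) : ℕ → List A
  | 0 => []
  | n + 1 => w ++ listPow w n

theorem SynCong.listPow_succ_mem {A : Type*} {L : Set (List A)} {w : List A}
    (hidem : SynCong L w (w ++ w)) (hw : w ∈ L) (n : ℕ) : listPow w (n + 1) ∈ L := by
  induction n with
  | zero => simpa [listPow] using hw
  | succ n ih => simpa [listPow] using (hidem [] (listPow w n)).mp (by simpa [listPow] using ih)

theorem listPow_nil {A : Type*} (n : ℕ) : listPow ([] : List A) n = [] := by
  induction n with
  | zero => rfl
  | succ n ih => simpa [listPow] using ih

theorem listPow_eq_nil_iff {A : Type*} {w : List A} {n : ℕ} (hn : n ≠ 0) :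
    listPow w n = [] ↔ w = [] := by
  obtain ⟨n, rfl⟩ := Nat.exists_eq_succ_of_ne_zero hn
  exact ⟨fun h => (List.append_eq_nil_iff.mp h).1, by rintro rfl; exact listPow_nil _⟩

section Words

variable {G : Type*} [Group G] {X : Set G}

@[simp]
theorem wordProd_nil : wordProd ([] : List X) = 1 := rfl

@[simp]
theorem wordProd_append (u v : List X) : wordProd (u ++ v) = wordProd u * wordProd v := by
  simp [wordProd]

@[simp]
theorem wordProd_listPow (w : List X) (n : ℕ) : wordProd (listPow w n) = wordProd w ^ n := by
  induction n with
  | zero => rw [pow_zero]; rfl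
  | succ n ih => rw [listPow, wordProd_append, ih, pow_succ']

theorem exists_wordProd_eq_of_mem_submonoidClosure {g : G} (hg : g ∈ Submonoid.closure X) :
    ∃ w : List X, wordProd w = g := by
  obtain ⟨l, hlX, rfl⟩ := Submonoid.exists_list_of_mem_closure hg
  refine ⟨l.pmap Subtype.mk hlX, ?_⟩
  simp [wordProd, List.map_pmap]

theorem exists_wordProd_eq (hsym : ∀ x ∈ X, x⁻¹ ∈ X) (hgen : Subgroup.closure X = ⊤)
    (g : G) :
    ∃ w : List X, wordProd w = g := by
  have hXinv : X⁻¹ ⊆ X := fun x hx => inv_inv x ▸ hsym _ hx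
  apply exists_wordProd_eq_of_mem_submonoidClosure
  rw [← Set.union_eq_self_of_subset_right hXinv, ← Subgroup.closure_toSubmonoid, hgen]
  trivial

theorem exists_isGeodesic_wordProd_eq {g : G} (hg : ∃ w : List X, wordProd w = g) :
    ∃ w : List X, IsGeodesic X w ∧ wordProd w = g := by
  classical
  obtain ⟨w₀, hw₀⟩ := hg
  have hlen : ∃ k, ∃ w : List X, w.length = k ∧ wordProd w = g := ⟨_, w₀, rfl, hw₀⟩
  obtain ⟨w, hwlen, hwg⟩ := Nat.find_spec hlen
  refine ⟨w, fun v hv => ?_, hwg⟩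
  rw [hwlen]
  exact Nat.find_min' hlen ⟨v, rfl, hv.trans hwg⟩

theorem IsGeodesic.eq_nil_of_wordProd_eq_one {w : List X} (hw : IsGeodesic X w)
    (h1 : wordProd w = 1) : w = [] :=
  List.eq_nil_of_length_eq_zero (Nat.le_zero.mp (hw [] h1.symm))

end Words

theorem stmt14_general {G : Type*} [Group G] (X : Set G)
    (hsym : ∀ x ∈ X, x⁻¹ ∈ X) (hgen : Subgroup.closure X = ⊤)
    (hidem : ∀ w : List X, w ≠ [] → SynCong (Geo X) w (w ++ w)) :
    (∀ w : List X, IsGeodesic X w → ∀ m : ℕ, 1 ≤ m → IsGeodesic X (listPow w m)) ∧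
    (∀ g : G, g ≠ 1 → ¬ IsOfFinOrder g) := by
  have hsq (w : List X) : SynCong (Geo X) w (w ++ w) := by
    rcases eq_or_ne w [] with rfl | hw
    · exact fun _ _ => Iff.rfl
    · exact hidem w hw
  have hpow (w : List X) (hw : IsGeodesic X w) : ∀ m : ℕ, 1 ≤ m → IsGeodesic X (listPow w m)
    | m + 1, _ => (hsq w).listPow_succ_mem hw m
  refine ⟨hpow, fun g hg hfo => hg ?_⟩
  obtain ⟨n, hn, hgn⟩ := isOfFinOrder_iff_pow_eq_one.mp hfo
  obtain ⟨w, hw, rfl⟩ := exists_isGeodesic_wordProd_eq (exists_wordProd_eq hsym hgen g)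
  have hwn : listPow w n = [] :=
    (hpow w hw n hn).eq_nil_of_wordProd_eq_one (by rw [wordProd_listPow, hgn])
  rw [(listPow_eq_nil_iff hn.ne').mp hwn, wordProd_nil]

/-- If the syntactic semigroup of `Geo(G,X)` is idempotent, then every power of a
geodesic word is geodesic; in particular `G` is torsion-free. -/
theorem stmt14 {G : Type*} [Group G] (X : Set G)
    (hfin : X.Finite) (hsym : ∀ x ∈ X, x⁻¹ ∈ X) (hgen : Subgroup.closure X = ⊤)
    (hidem : ∀ w : List X, w ≠ [] → SynCong (Geo X) w (w ++ w)) :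
    (∀ w : List X, IsGeodesic X w → ∀ m : ℕ, 1 ≤ m → IsGeodesic X (listPow w m)) ∧
    (∀ g : G, g ≠ 1 → ¬ IsOfFinOrder g) :=
  stmt14_general X hsym hgen hidem
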